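/- If there exists a singular value λ̃ of M strictly larger than ‖v*‖, with singular vectors q_ν, q_μ, then for any α ∈ [0,1], β ∈ (0,1] with α² + β² = 1, setting g_ν = α p_ν + β q_ν and g_μ = α p_μ + β q_μ, the rank-one tensor Ū(g_ν, g_μ) = ⟨V̄(g_ν,g_μ), b⟩ V̄(g_ν,g_μ) satisfies f(Ū(g_ν,g_μ)) < f(v*). In particular −2‖b‖² f(Ū(g_ν,g_μ)) = (α² ‖v*‖ + β² λ̃)². -/

import Mathlib

open scoped BigOperators

/-- Rank-one tensor in `⊗_{μ} ℝ^{n μ}`, modeled as `EuclideanSpace ℝ (Π μ, Fin (n μ))`. -/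
noncomputable def rankOne {d : ℕ} (n : Fin d → ℕ)
    (p : ∀ μ, EuclideanSpace ℝ (Fin (n μ))) :
    EuclideanSpace ℝ (∀ μ, Fin (n μ)) :=
  WithLp.toLp 2 (fun i => ∏ μ, p μ (i μ))

/-- The objective function `f(v) = (1/‖b‖²)(½⟨v,v⟩ − ⟨b,v⟩)`. -/
noncomputable def fobj {ι : Type*} [Fintype ι] (b v : EuclideanSpace ℝ ι) : ℝ :=
  (1 / ‖b‖ ^ 2) * ((1 / 2) * (inner ℝ v v : ℝ) - (inner ℝ b v : ℝ))


/-- The rank-one tensor `V̄(g_ν, g_μ)` obtained from fixed vectors `p` by replacing the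
`ν`-th and `μ`-th components by `g_ν` and `g_μ`. -/
noncomputable def Vbar {d : ℕ} (n : Fin d → ℕ)
    (p : ∀ ξ, EuclideanSpace ℝ (Fin (n ξ))) (ν μ : Fin d)
    (gν : EuclideanSpace ℝ (Fin (n ν))) (gμ : EuclideanSpace ℝ (Fin (n μ))) :
    EuclideanSpace ℝ (∀ ξ, Fin (n ξ)) :=
  rankOne n (Function.update (Function.update p ν gν) μ gμ)


/-! `Ū` is the orthogonal projection of `b` onto the line through the unit tensor `V̄`, so
`⟪b, Ū⟫ = ‖Ū‖²` and `f(Ū) = -⟪V̄, b⟫² / (2‖b‖²)`; the same identity holds for `v*`. By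
definition of `M`, `⟪V̄, b⟫ = ⟪M g_ν, g_μ⟫ = α²‖v*‖ + β²λ̃` by orthonormality, and this exceeds
`‖v*‖` because `β > 0`. -/

open scoped InnerProductSpace

section Geometry

variable {E F : Type*} [NormedAddCommGroup E] [InnerProductSpace ℝ E]
  [NormedAddCommGroup F] [InnerProductSpace ℝ F]

lemma norm_smul_add_smul_eq_one {x y : E} (hx : ‖x‖ = 1) (hy : ‖y‖ = 1) (hxy : ⟪x, y⟫_ℝ = 0)
    {α β : ℝ} (hαβ : α ^ 2 + β ^ 2 = 1) : ‖α • x + β • y‖ = 1 := by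
  have hpyth := norm_add_sq_eq_norm_sq_add_norm_sq_real
    (by rw [real_inner_smul_left, real_inner_smul_right, hxy, mul_zero, mul_zero] :
      ⟪α • x, β • y⟫_ℝ = 0)
  simp only [norm_smul, hx, hy, Real.norm_eq_abs, mul_one] at hpyth
  have hsq : ‖α • x + β • y‖ ^ 2 = 1 ^ 2 := by nlinarith [sq_abs α, sq_abs β]
  exact (pow_left_inj₀ (norm_nonneg _) zero_le_one two_ne_zero).1 hsq

lemma inner_map_smul_add_smul (M : E →ₗ[ℝ] F) {x y : E} {x' y' : F} {a t : ℝ}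
    (hx : M x = a • x') (hy : M y = t • y') (hx' : ‖x'‖ = 1) (hy' : ‖y'‖ = 1)
    (hxy' : ⟪x', y'⟫_ℝ = 0) (α β : ℝ) :
    ⟪M (α • x + β • y), α • x' + β • y'⟫_ℝ = α ^ 2 * a + β ^ 2 * t := by
  have hyx' : ⟪y', x'⟫_ℝ = 0 := inner_eq_zero_symm.1 hxy'
  simp only [map_add, map_smul, hx, hy, inner_add_left, inner_add_right, real_inner_smul_left,
    real_inner_smul_right, real_inner_self_eq_norm_sq, hx', hy', hxy', hyx']
  ring

end Geometry

section Objective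

variable {ι : Type*} [Fintype ι] (b : EuclideanSpace ℝ ι)

lemma fobj_eq_of_inner_eq_norm_sq {v : EuclideanSpace ℝ ι} (h : ⟪b, v⟫_ℝ = ‖v‖ ^ 2) :
    fobj b v = -‖v‖ ^ 2 / (2 * ‖b‖ ^ 2) := by
  rw [fobj, real_inner_self_eq_norm_sq, h]
  ring

lemma fobj_inner_smul_of_norm_eq_one {V : EuclideanSpace ℝ ι} (hV : ‖V‖ = 1) :
    fobj b (⟪V, b⟫_ℝ • V) = -⟪V, b⟫_ℝ ^ 2 / (2 * ‖b‖ ^ 2) := by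
  have hnorm : ‖⟪V, b⟫_ℝ • V‖ ^ 2 = ⟪V, b⟫_ℝ ^ 2 := by
    rw [norm_smul, hV, mul_one, Real.norm_eq_abs, sq_abs]
  rw [fobj_eq_of_inner_eq_norm_sq b (by rw [hnorm, real_inner_smul_right, real_inner_comm, sq]),
    hnorm]

end Objective

section RankOne

variable {d : ℕ} (n : Fin d → ℕ)

lemma inner_rankOne (p q : ∀ ξ, EuclideanSpace ℝ (Fin (n ξ))) :
    ⟪rankOne n p, rankOne n q⟫_ℝ = ∏ ξ, ⟪p ξ, q ξ⟫_ℝ := by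
  simp only [rankOne, PiLp.inner_apply, RCLike.inner_apply, conj_trivial]
  rw [Finset.prod_univ_sum, Fintype.piFinset_univ]
  exact Finset.sum_congr rfl fun i _ => Finset.prod_mul_distrib.symm

lemma norm_rankOne (p : ∀ ξ, EuclideanSpace ℝ (Fin (n ξ))) :
    ‖rankOne n p‖ = ∏ ξ, ‖p ξ‖ := by
  have hsq : ‖rankOne n p‖ ^ 2 = (∏ ξ, ‖p ξ‖) ^ 2 := by
    simp only [← real_inner_self_eq_norm_sq, inner_rankOne, ← Finset.prod_pow]
  exact (pow_left_inj₀ (norm_nonneg _) (Finset.prod_nonneg fun ξ _ => norm_nonneg _)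
    two_ne_zero).1 hsq

lemma norm_Vbar {p : ∀ ξ, EuclideanSpace ℝ (Fin (n ξ))} (hp : ∀ ξ, ‖p ξ‖ = 1) {ν μ : Fin d}
    {gν : EuclideanSpace ℝ (Fin (n ν))} {gμ : EuclideanSpace ℝ (Fin (n μ))}
    (hgν : ‖gν‖ = 1) (hgμ : ‖gμ‖ = 1) : ‖Vbar n p ν μ gν gμ‖ = 1 := by
  have hunit : ∀ ξ, ‖Function.update (Function.update p ν gν) μ gμ ξ‖ = 1 :=
    (Function.forall_update_iff _ fun ξ g => ‖g‖ = 1).2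
      ⟨hgμ, fun ξ _ => (Function.forall_update_iff p fun ξ g => ‖g‖ = 1).2
        ⟨hgν, fun ξ _ => hp ξ⟩ ξ⟩
  rw [Vbar, norm_rankOne, Finset.prod_eq_one fun ξ _ => hunit ξ]

end RankOne

theorem stmt7_general {d : ℕ} (n : Fin d → ℕ)
    (b : EuclideanSpace ℝ (∀ ξ, Fin (n ξ))) (hb : b ≠ 0)
    (p : ∀ ξ, EuclideanSpace ℝ (Fin (n ξ))) (hp : ∀ ξ, ‖p ξ‖ = 1)
    (ν μ : Fin d)
    (lam : ℝ) (hlam0 : 0 ≤ lam)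
    (v : EuclideanSpace ℝ (∀ ξ, Fin (n ξ)))
    (hlam : lam = ‖v‖)
    (hbv : (inner ℝ b v : ℝ) = ‖v‖ ^ 2)
    (M : EuclideanSpace ℝ (Fin (n ν)) →ₗ[ℝ] EuclideanSpace ℝ (Fin (n μ)))
    (hM : ∀ (gν : EuclideanSpace ℝ (Fin (n ν))) (gμ : EuclideanSpace ℝ (Fin (n μ))),
      (inner ℝ (M gν) gμ : ℝ) = (inner ℝ (Vbar n p ν μ gν gμ) b : ℝ))
    (hMp : M (p ν) = lam • p μ)
    (lt : ℝ) (hlt : lam < lt)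
    (qν : EuclideanSpace ℝ (Fin (n ν))) (qμ : EuclideanSpace ℝ (Fin (n μ)))
    (hqν : ‖qν‖ = 1) (hqμ : ‖qμ‖ = 1)
    (hqνp : (inner ℝ qν (p ν) : ℝ) = 0) (hqμp : (inner ℝ qμ (p μ) : ℝ) = 0)
    (hMq : M qν = lt • qμ)
    (α β : ℝ) (hβ : β ∈ Set.Ioc (0:ℝ) 1)
    (hαβ : α ^ 2 + β ^ 2 = 1) :
    fobj b ((inner ℝ (Vbar n p ν μ (α • p ν + β • qν) (α • p μ + β • qμ)) b : ℝ) •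
        Vbar n p ν μ (α • p ν + β • qν) (α • p μ + β • qμ)) < fobj b v ∧
      -2 * ‖b‖ ^ 2 *
        fobj b ((inner ℝ (Vbar n p ν μ (α • p ν + β • qν) (α • p μ + β • qμ)) b : ℝ) •
          Vbar n p ν μ (α • p ν + β • qν) (α • p μ + β • qμ))
        = (α ^ 2 * lam + β ^ 2 * lt) ^ 2 := by
  have hgν : ‖α • p ν + β • qν‖ = 1 :=
    norm_smul_add_smul_eq_one (hp ν) hqν (inner_eq_zero_symm.1 hqνp) hαβ
  have hgμ : ‖α • p μ + β • qμ‖ = 1 :=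
    norm_smul_add_smul_eq_one (hp μ) hqμ (inner_eq_zero_symm.1 hqμp) hαβ
  have hc : ⟪Vbar n p ν μ (α • p ν + β • qν) (α • p μ + β • qμ), b⟫_ℝ
      = α ^ 2 * lam + β ^ 2 * lt := by
    rw [← hM, inner_map_smul_add_smul M hMp hMq (hp μ) hqμ (inner_eq_zero_symm.1 hqμp)]
  have hfU := fobj_inner_smul_of_norm_eq_one b (norm_Vbar n hp hgν hgμ)
  have hfv : fobj b v = -lam ^ 2 / (2 * ‖b‖ ^ 2) := by
    rw [fobj_eq_of_inner_eq_norm_sq b hbv, hlam]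
  have hb2 : 0 < 2 * ‖b‖ ^ 2 := by have := norm_pos_iff.2 hb; positivity
  have hlam_lt : lam < α ^ 2 * lam + β ^ 2 * lt := by
    nlinarith [mul_lt_mul_of_pos_left hlt (pow_pos hβ.1 2)]
  refine ⟨?_, ?_⟩
  · rw [hfU, hfv, hc, div_lt_div_iff_of_pos_right hb2, neg_lt_neg_iff]
    exact pow_lt_pow_left₀ hlam_lt hlam0 two_ne_zero
  · rw [hfU, hc]
    field_simp

/-- If `M` has a singular value `λ̃ > ‖v*‖` with singular vectors `q_ν ⊥ p_ν`, `q_μ ⊥ p_μ`,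
then along `g_ν = α p_ν + β q_ν`, `g_μ = α p_μ + β q_μ` (α² + β² = 1, β > 0) the rank-one
tensor `Ū(g_ν, g_μ)` satisfies `f(Ū) < f(v*)`, and `−2‖b‖² f(Ū) = (α²‖v*‖ + β²λ̃)²`. -/
theorem stmt7 {d : ℕ} (n : Fin d → ℕ)
    (b : EuclideanSpace ℝ (∀ ξ, Fin (n ξ))) (hb : b ≠ 0)
    (p : ∀ ξ, EuclideanSpace ℝ (Fin (n ξ))) (hp : ∀ ξ, ‖p ξ‖ = 1)
    (ν μ : Fin d) (hνμ : ν ≠ μ)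
    (lam : ℝ) (hlam0 : 0 ≤ lam)
    (v : EuclideanSpace ℝ (∀ ξ, Fin (n ξ)))
    (hv : v = lam • rankOne n p) (hlam : lam = ‖v‖)
    (hbv : (inner ℝ b v : ℝ) = ‖v‖ ^ 2)
    (M : EuclideanSpace ℝ (Fin (n ν)) →ₗ[ℝ] EuclideanSpace ℝ (Fin (n μ)))
    (hM : ∀ (gν : EuclideanSpace ℝ (Fin (n ν))) (gμ : EuclideanSpace ℝ (Fin (n μ))),
      (inner ℝ (M gν) gμ : ℝ) = (inner ℝ (Vbar n p ν μ gν gμ) b : ℝ))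
    (hMp : M (p ν) = lam • p μ)
    (hMpadj : (LinearMap.adjoint M) (p μ) = lam • p ν)
    (lt : ℝ) (hlt : lam < lt)
    (qν : EuclideanSpace ℝ (Fin (n ν))) (qμ : EuclideanSpace ℝ (Fin (n μ)))
    (hqν : ‖qν‖ = 1) (hqμ : ‖qμ‖ = 1)
    (hqνp : (inner ℝ qν (p ν) : ℝ) = 0) (hqμp : (inner ℝ qμ (p μ) : ℝ) = 0)
    (hMq : M qν = lt • qμ) (hMqadj : (LinearMap.adjoint M) qμ = lt • qν)
    (α β : ℝ) (hα : α ∈ Set.Icc (0:ℝ) 1) (hβ : β ∈ Set.Ioc (0:ℝ) 1)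
    (hαβ : α ^ 2 + β ^ 2 = 1) :
    fobj b ((inner ℝ (Vbar n p ν μ (α • p ν + β • qν) (α • p μ + β • qμ)) b : ℝ) •
        Vbar n p ν μ (α • p ν + β • qν) (α • p μ + β • qμ)) < fobj b v ∧
      -2 * ‖b‖ ^ 2 *
        fobj b ((inner ℝ (Vbar n p ν μ (α • p ν + β • qν) (α • p μ + β • qμ)) b : ℝ) •
          Vbar n p ν μ (α • p ν + β • qν) (α • p μ + β • qμ))
        = (α ^ 2 * lam + β ^ 2 * lt) ^ 2 :=
  stmt7_general n b hb p hp ν μ lam hlam0 v hlam hbv M hM hMp lt hlt qν qμ hqν hqμ hqνp hqμp hMq α β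
    hβ hαβ
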